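/- For n ≥ 1 and 0 ≤ k ≤ n/2, the number of partitions of k fitting in an a × b rectangle minus the number of partitions of k−1 fitting in the same rectangle is nonnegative whenever k ≤ ab/2; i.e., the coefficients of the Gaussian binomial coefficient binom(a+b, a)_q are unimodal. -/

import Mathlib

namespace OPAC

noncomputable section

open Equiv Finset

/-! ### Partitions: basic access -/

/-- The parts of a partition, sorted in weakly decreasing order. -/
def sortedParts {n : ℕ} (l : n.Partition) : List ℕ := Multiset.sort l.parts (· ≥ ·)

/-- `partK l i` is the `(i+1)`-st largest part `λ_{i+1}` of `l` (0-indexed), or `0`. -/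
def partK {n : ℕ} (l : n.Partition) (i : ℕ) : ℕ := (sortedParts l).getD i 0

/-- The number of (positive) parts `ℓ(λ)`. -/
def numParts {n : ℕ} (l : n.Partition) : ℕ := Multiset.card l.parts

lemma sum_sortedParts {n : ℕ} (l : n.Partition) : (sortedParts l).sum = n := by
  rw [← Multiset.sum_coe, sortedParts, Multiset.sort_eq, l.parts_sum]

lemma sum_range_getD (L : List ℕ) : ∀ (m : ℕ), L.length ≤ m →
    ∑ i ∈ Finset.range m, L.getD i 0 = L.sum := by
  induction L with
  | nil => intro m _; simp
  | cons a L ih =>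
    intro m hm
    cases m with
    | zero => simp at hm
    | succ m =>
      rw [Finset.sum_range_succ']
      simp only [List.getD_cons_succ, List.getD_cons_zero]
      rw [ih m (by simpa using hm), List.sum_cons]
      omega

/-! ### Constructions of partitions -/

/-- `extendP l N h` is the padded partition `l[N] = (N - |l|, l₁, l₂, …)`. -/
def extendP {a : ℕ} (l : a.Partition) (N : ℕ) (h : a ≤ N) : N.Partition :=
  Nat.Partition.ofSums N ((N - a) ::ₘ l.parts)
    (by rw [Multiset.sum_cons, l.parts_sum]; omega)

/-- Coordinatewise sum `λ + μ` of two partitions. -/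
def padd {a b : ℕ} (l : a.Partition) (m : b.Partition) : (a + b).Partition :=
  Nat.Partition.ofSums _
    (↑(List.ofFn (fun i : Fin (max (sortedParts l).length (sortedParts m).length) =>
        (sortedParts l).getD i 0 + (sortedParts m).getD i 0)))
    (by
      rw [Multiset.sum_coe, List.sum_ofFn, Finset.sum_add_distrib]
      have h1 : ∑ x : Fin (max (sortedParts l).length (sortedParts m).length),
          (sortedParts l).getD (x : ℕ) 0
          = ∑ i ∈ Finset.range (max (sortedParts l).length (sortedParts m).length),
            (sortedParts l).getD i 0 :=
        Fin.sum_univ_eq_sum_range (fun i : ℕ => (sortedParts l).getD i 0) _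
      have h2 : ∑ x : Fin (max (sortedParts l).length (sortedParts m).length),
          (sortedParts m).getD (x : ℕ) 0
          = ∑ i ∈ Finset.range (max (sortedParts l).length (sortedParts m).length),
            (sortedParts m).getD i 0 :=
        Fin.sum_univ_eq_sum_range (fun i : ℕ => (sortedParts m).getD i 0) _
      rw [h1, h2, sum_range_getD _ _ (le_max_left _ _), sum_range_getD _ _ (le_max_right _ _),
        sum_sortedParts, sum_sortedParts])

/-- Add `c` to each of the `ℓ(l)` parts of `l`, i.e. the partition `c^{ℓ(l)} + l`. -/
def addToEach {a : ℕ} (c : ℕ) (l : a.Partition) : (a + numParts l * c).Partition :=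
  Nat.Partition.ofSums _ (l.parts.map (fun x => x + c))
    (by
      have h : (l.parts.map (fun x => id x + (fun _ : ℕ => c) x)).sum
          = (l.parts.map id).sum + (l.parts.map (fun _ => c)).sum := Multiset.sum_map_add
      simp only [id] at h
      rw [h, Multiset.map_id', Multiset.map_const', Multiset.sum_replicate, l.parts_sum,
        smul_eq_mul, numParts])

/-- The partition `(c^k, ν)`: `k` parts equal to `c` followed by the parts of `v`. -/
def repCat {m : ℕ} (k c : ℕ) (v : m.Partition) : (k * c + m).Partition :=
  Nat.Partition.ofSums _ (Multiset.replicate k c + v.parts)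
    (by rw [Multiset.sum_add, Multiset.sum_replicate, v.parts_sum, smul_eq_mul])

/-- Scale each part of `l` by `N`. -/
def scaleP (N : ℕ) {a : ℕ} (l : a.Partition) : (N * a).Partition :=
  Nat.Partition.ofSums _ (l.parts.map (fun x => N * x))
    (by
      have h := Multiset.sum_map_mul_left (a := N) (s := l.parts) (f := id)
      simp only [id] at h
      rw [h, Multiset.map_id', l.parts_sum])

/-- The rectangular partition `(c^r)`. -/
def rectP (c r : ℕ) : (r * c).Partition :=
  Nat.Partition.ofSums _ (Multiset.replicate r c)
    (by rw [Multiset.sum_replicate, smul_eq_mul])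

/-- The one-column partition `(1^n)`. -/
def oneColumn (n : ℕ) : n.Partition :=
  Nat.Partition.ofSums n (Multiset.replicate n 1)
    (by rw [Multiset.sum_replicate, smul_eq_mul, mul_one])

/-- The two-row partition `(a - k, k)` of `a`. -/
def twoRowP (a k : ℕ) (h : k ≤ a) : a.Partition :=
  extendP (Nat.Partition.indiscrete k) a h

/-! ### Conjugate partition -/

lemma sum_ite_lt (a : ℕ) : ∀ (n : ℕ), a ≤ n →
    (∑ j ∈ Finset.range n, if j < a then (1 : ℕ) else 0) = a := by
  intro n
  induction n with
  | zero => intro h; interval_cases a; simp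
  | succ n ih =>
    intro h
    rw [Finset.sum_range_succ]
    rcases Nat.lt_or_ge n a with h1 | h1
    · rw [Finset.sum_congr rfl fun j hj =>
        if_pos (lt_trans (Finset.mem_range.mp hj) h1), if_pos h1]
      simp only [Finset.sum_const, Finset.card_range, smul_eq_mul, mul_one]
      omega
    · rw [ih h1, if_neg (Nat.not_lt.mpr h1)]
      omega

lemma sum_colCounts (n : ℕ) : ∀ (s : Multiset ℕ), (∀ p ∈ s, p ≤ n) →
    (((Multiset.range n).map fun j => Multiset.card (s.filter (fun p => j < p))).sum = s.sum) := by
  intro s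
  induction s using Multiset.induction_on with
  | empty => intro _; simp
  | cons a s ih =>
    intro hs
    have ha : a ≤ n := hs a (Multiset.mem_cons_self a s)
    have hrec := ih (fun p hp => hs p (Multiset.mem_cons_of_mem hp))
    have hcong : (Multiset.range n).map (fun j => Multiset.card ((a ::ₘ s).filter (fun p => j < p)))
        = (Multiset.range n).map (fun j =>
            (if j < a then 1 else 0) + Multiset.card (s.filter (fun p => j < p))) := by
      apply Multiset.map_congr rfl
      intro j _
      rw [Multiset.filter_cons]
      split <;> simp [add_comm]
    rw [hcong, Multiset.sum_map_add, hrec, Multiset.sum_cons]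
    have : ((Multiset.range n).map fun j => if j < a then (1:ℕ) else 0).sum = a := by
      rw [← Finset.range_val, ← Finset.sum_eq_multiset_sum]
      exact sum_ite_lt a n ha
    omega

/-- The conjugate (transpose) partition. -/
def conj {n : ℕ} (l : n.Partition) : n.Partition :=
  Nat.Partition.ofSums n
    ((Multiset.range n).map fun j => Multiset.card (l.parts.filter (fun p => j < p)))
    (by
      rw [sum_colCounts n l.parts fun p hp => ?_, l.parts_sum]
      have h1 : p ≤ l.parts.sum :=
        Multiset.single_le_sum (fun _ _ => Nat.zero_le _) p hp
      rwa [l.parts_sum] at h1)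

/-! ### Irreducible characters of the symmetric group, via the Frobenius character formula -/

/-- The Vandermonde product `∏_{i<j} (x_i - x_j)`. -/
def vandermonde (n : ℕ) : MvPolynomial (Fin n) ℤ :=
  ∏ p ∈ Finset.univ.filter (fun p : Fin n × Fin n => p.1 < p.2),
    (MvPolynomial.X p.1 - MvPolynomial.X p.2)

/-- The power sum `p_k = ∑ x_i^k` in `n` variables. -/
def powerSum (n k : ℕ) : MvPolynomial (Fin n) ℤ := ∑ i : Fin n, MvPolynomial.X i ^ k

/-- The power sum symmetric polynomial `p_α` where `α` is the (full) cycle type of `w`,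
including fixed points as parts equal to `1`. -/
def powerSumCycleType (n : ℕ) (w : Equiv.Perm (Fin n)) : MvPolynomial (Fin n) ℤ :=
  (w.cycleType.map (powerSum n)).prod * (powerSum n 1) ^ (n - w.cycleType.sum)

/-- The exponent vector `λ + δ = (λ₁ + n - 1, λ₂ + n - 2, …, λ_n)`. -/
def staircaseExp {n : ℕ} (l : n.Partition) : Fin n →₀ ℕ :=
  Finsupp.equivFunOnFinite.symm (fun i => partK l i + (n - 1 - (i : ℕ)))

/-- The irreducible character `χ^λ(w)` of the symmetric group `S_n`, computed by the
Frobenius character formula: `χ^λ(α)` is the coefficient of `x^{λ+δ}` in `a_δ · p_α`. -/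
def chi {n : ℕ} (l : n.Partition) (w : Equiv.Perm (Fin n)) : ℤ :=
  MvPolynomial.coeff (staircaseExp l) (vandermonde n * powerSumCycleType n w)

/-- The Kronecker coefficient `g(λ,μ,ν) = (1/n!) ∑_{w ∈ S_n} χ^λ(w) χ^μ(w) χ^ν(w)`. -/
def kron {n : ℕ} (l m v : n.Partition) : ℚ :=
  (n.factorial : ℚ)⁻¹ *
    ∑ w : Equiv.Perm (Fin n), (chi l w : ℚ) * (chi m w : ℚ) * (chi v w : ℚ)

/-- The full cycle type of a permutation, including fixed points as cycles of length 1. -/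
def fullCycleType {n : ℕ} (w : Equiv.Perm (Fin n)) : Multiset ℕ :=
  w.cycleType + Multiset.replicate (n - w.cycleType.sum) 1

/-- The Littlewood–Richardson coefficient `c^λ_{μν} = ⟨Res_{S_a × S_b} χ^λ, χ^μ × χ^ν⟩`. -/
def lrChar {a b : ℕ} (l : (a + b).Partition) (m : a.Partition) (v : b.Partition) : ℚ :=
  ((a.factorial * b.factorial : ℕ) : ℚ)⁻¹ *
    ∑ u : Equiv.Perm (Fin a), ∑ w : Equiv.Perm (Fin b),
      (chi m u : ℚ) * (chi v w : ℚ) *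
        (chi l (finSumFinEquiv.permCongr (Equiv.Perm.sumCongr u w)) : ℚ)

/-! ### Young diagrams, tableaux and Schur functions -/

/-- The Young diagram of a partition. -/
def shape {n : ℕ} (l : n.Partition) : YoungDiagram :=
  YoungDiagram.ofRowLens (sortedParts l) (List.Pairwise.sortedGE (Multiset.pairwise_sort _ _))

/-- Semistandard Young tableaux of shape `l` and weight `d`:
for every `k`, exactly `d k` cells have entry `k`. -/
def ssytWeighted {n : ℕ} (l : n.Partition) (d : ℕ → ℕ) :
    Set (SemistandardYoungTableau (shape l)) :=
  {T | ∀ k : ℕ, (((shape l).cells.filter (fun c => T c.1 c.2 = k)).card = d k)}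

/-- The coefficient of `x^d` in the Schur function `s_l`: the number of SSYT of
shape `l` and weight `d`. -/
def schurCoeff {n : ℕ} (l : n.Partition) (d : ℕ →₀ ℕ) : ℕ := (ssytWeighted l ⇑d).ncard

/-- The Schur function `s_l` in infinitely many variables `x_0, x_1, …`, as the
generating function of semistandard Young tableaux of shape `l`. -/
def schurSeries {n : ℕ} (l : n.Partition) : MvPowerSeries ℕ ℚ :=
  fun d => (schurCoeff l d : ℚ)

/-- The complete homogeneous symmetric function `h_m`: the sum of all monomials of degree `m`. -/
def hSeries (m : ℕ) : MvPowerSeries ℕ ℚ :=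
  fun d => if (d.sum fun _ k => k) = m then 1 else 0

/-- `h_m` for integer index, with `h_m = 0` for `m < 0`. -/
def hSeriesZ (m : ℤ) : MvPowerSeries ℕ ℚ := if m < 0 then 0 else hSeries m.toNat

/-- The complete homogeneous symmetric polynomial `h_m` in `N` variables. -/
def hPoly (N m : ℕ) : MvPolynomial (Fin N) ℚ :=
  ∑ s ∈ (Finset.univ : Finset (Fin N)).sym m, ((s : Sym (Fin N) m).1.map MvPolynomial.X).prod

/-- `h_m` in `N` variables for integer index, with `h_m = 0` for `m < 0`. -/
def hPolyZ (N : ℕ) (m : ℤ) : MvPolynomial (Fin N) ℚ := if m < 0 then 0 else hPoly N m.toNat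

/-- The Schur polynomial `s_l(x_1, …, x_N)` (via the Jacobi–Trudi determinant). -/
def schurPoly (N : ℕ) {n : ℕ} (l : n.Partition) : MvPolynomial (Fin N) ℚ :=
  (Matrix.of fun i j : Fin (numParts l) => hPolyZ N ((partK l i : ℤ) - (i : ℕ) + (j : ℕ))).det

/-! ### Partitions in a rectangle -/

/-- `pRect r a b` is the number of partitions of `r` fitting in an `a × b` box:
largest part at most `a` and at most `b` parts. -/
def pRect (r a b : ℕ) : ℕ :=
  ((Finset.univ : Finset (Nat.Partition r)).filter
    (fun l => (∀ p ∈ l.parts, p ≤ a) ∧ Multiset.card l.parts ≤ b)).card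

/-- `pRect` with integer index, zero for negative index. -/
def pZ (r : ℤ) (a b : ℕ) : ℕ := if 0 ≤ r then pRect r.toNat a b else 0

/-! ### Restrictions of exponents, for the Cauchy identity -/

/-- Restriction of an exponent on `ℕ ⊕ ℕ` to the first (`x`) block. -/
def xpart (e : (ℕ ⊕ ℕ) →₀ ℕ) : ℕ →₀ ℕ :=
  Finsupp.comapDomain Sum.inl e (Sum.inl_injective.injOn)

/-- Restriction of an exponent on `ℕ ⊕ ℕ` to the second (`y`) block. -/
def ypart (e : (ℕ ⊕ ℕ) →₀ ℕ) : ℕ →₀ ℕ :=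
  Finsupp.comapDomain Sum.inr e (Sum.inr_injective.injOn)

/-- The total degree of an exponent vector. -/
def degOf (d : ℕ →₀ ℕ) : ℕ := d.sum fun _ k => k

end

end OPAC

/-! Partitions of `k` in an `a × b` box correspond, by padding with zeros, to multisets of `b`
numbers in `[0, a]` with sum `k`, i.e. to the monomials of degree `k` in `Sym^b (Sym^a ℚ²)`.
On the span `V k` of these multisets, the operators `raise` (replace one entry `x` by `x + 1`,
with weight `a - x`) and `lower` (replace `x` by `x - 1`, with weight `x`) form an `sl₂`-pair:
`lower ∘ raise - raise ∘ lower = a * b - 2 * k` on `V k`. The usual `sl₂` argument then shows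
that `raise : V k → V (k + 1)` is injective while `2 * k < a * b`, so `dim V k ≤ dim V (k + 1)`
(Proctor's proof). -/

theorem Multiset.sum_map_sum_map_erase_comm {α M : Type*} [DecidableEq α] [AddCommGroup M]
    (m : Multiset α) (F : α → α → M) :
    (m.map fun x => ((m.erase x).map (F x)).sum).sum
      = (m.map fun y => ((m.erase y).map fun x => F x y).sum).sum := by
  have off_diag : ∀ G : α → α → M, (m.map fun x => ((m.erase x).map (G x)).sum).sum
      = (m.map fun x => (m.map (G x)).sum).sum - (m.map fun x => G x x).sum := by
    intro G
    rw [eq_sub_iff_add_eq, ← Multiset.sum_map_add]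
    refine congrArg _ (Multiset.map_congr rfl fun x hx => ?_)
    rw [add_comm, Multiset.sum_map_erase hx]
  rw [off_diag, off_diag (fun y x => F x y), Multiset.sum_map_sum_map]

theorem Finsupp.apply_mem_of_forall_single_mem {α R M : Type*} [Semiring R] [AddCommMonoid M]
    [Module R M] (φ : (α →₀ R) →ₗ[R] M) {s : Set α} {p : Submodule R M}
    (h : ∀ m ∈ s, φ (single m 1) ∈ p) {x : α →₀ R} (hx : x ∈ supported R R s) : φ x ∈ p := by
  rw [supported_eq_span_single] at hx
  exact Submodule.span_le (p := p.comap φ) |>.mpr (by rintro _ ⟨m, hm, rfl⟩; exact h m hm) hx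

namespace GaussianUnimodal

section LoweringRaising

variable {K W : Type*} [Field K] [LinearOrder K] [IsStrictOrderedRing K] [AddCommGroup W]
  [Module K W] {E F : W →ₗ[K] W} {V : ℕ → Submodule K W} {N : K}

theorem eq_zero_of_lower_raise_eq_smul_of_nonpos (hF : ∀ k, ∀ x ∈ V (k + 1), F x ∈ V k)
    (hF₀ : ∀ x ∈ V 0, F x = 0) (hFE : ∀ k, ∀ x ∈ V k, F (E x) - E (F x) = (N - 2 * k) • x)
    {k : ℕ} (hk : 2 * k < N) {x : W} (hx : x ∈ V k) {t : K} (ht : t ≤ 0)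
    (h : F (E x) = t • x) : x = 0 := by
  induction k generalizing x t with
  | zero =>
    have hNt : (N - t) • x = 0 := by
      have := hFE 0 x hx
      rw [hF₀ x hx, map_zero, sub_zero, h, Nat.cast_zero, mul_zero, sub_zero] at this
      rw [sub_smul, this, sub_self]
    exact (smul_eq_zero.mp hNt).resolve_left (by push_cast at hk; linarith)
  | succ k ih =>
    -- `F x ∈ V k` satisfies the same hypothesis with the negative eigenvalue `s`.
    set s := t - (N - 2 * (k + 1 : ℕ)) with hs
    have hEF : E (F x) = s • x := by
      rw [sub_smul, ← h, ← hFE _ x hx]; abel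
    have hs0 : s < 0 := by rw [hs]; push_cast at hk ⊢; linarith
    have hFx : F x = 0 := by
      refine ih (by push_cast at hk ⊢; linarith) (hF k x hx) hs0.le ?_
      rw [hEF, map_smul]
    rw [hFx, map_zero] at hEF
    exact (smul_eq_zero.mp hEF.symm).resolve_left hs0.ne

theorem eq_zero_of_raise_eq_zero (hF : ∀ k, ∀ x ∈ V (k + 1), F x ∈ V k)
    (hF₀ : ∀ x ∈ V 0, F x = 0) (hFE : ∀ k, ∀ x ∈ V k, F (E x) - E (F x) = (N - 2 * k) • x)
    {k : ℕ} (hk : 2 * k < N) {x : W} (hx : x ∈ V k) (hEx : E x = 0) : x = 0 :=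
  eq_zero_of_lower_raise_eq_smul_of_nonpos hF hF₀ hFE hk hx le_rfl
    (by rw [hEx, map_zero, zero_smul])

end LoweringRaising

open Finsupp

noncomputable def replaceOp (c : ℕ → ℚ) (f : ℕ → ℕ) : (Multiset ℕ →₀ ℚ) →ₗ[ℚ] (Multiset ℕ →₀ ℚ) :=
  linearCombination ℚ fun m => (m.map fun x => c x • single (f x ::ₘ m.erase x) 1).sum

section ReplaceOp

variable (c d : ℕ → ℚ) (f g : ℕ → ℕ) (m : Multiset ℕ)

theorem replaceOp_single :
    replaceOp c f (single m 1) = (m.map fun x => c x • single (f x ::ₘ m.erase x) 1).sum := by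
  rw [replaceOp, linearCombination_single, one_smul]

theorem replaceOp_replaceOp_single :
    replaceOp d g (replaceOp c f (single m 1))
      = (m.map fun x => (c x * d (f x)) • single (g (f x) ::ₘ m.erase x) 1).sum
        + (m.map fun x => ((m.erase x).map fun y =>
            (c x * d y) • single (g y ::ₘ f x ::ₘ (m.erase x).erase y) 1).sum).sum := by
  rw [replaceOp_single, map_multiset_sum, Multiset.map_map, ← Multiset.sum_map_add]
  refine congrArg _ (Multiset.map_congr rfl fun x _ => ?_)
  simp only [Function.comp_apply, map_smul, replaceOp_single, Multiset.map_cons,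
    Multiset.sum_cons, Multiset.erase_cons_head, smul_add, Multiset.smul_sum, Multiset.map_map,
    smul_smul]
  refine congrArg _ (congrArg _ (Multiset.map_congr rfl fun y hy => ?_))
  rw [Multiset.erase_cons_tail_of_mem hy]

theorem replaceOp_commutator_single :
    replaceOp d g (replaceOp c f (single m 1)) - replaceOp c f (replaceOp d g (single m 1))
      = (m.map fun x => (c x * d (f x)) • single (g (f x) ::ₘ m.erase x) 1
          - (d x * c (g x)) • single (f (g x) ::ₘ m.erase x) 1).sum := by
  rw [replaceOp_replaceOp_single, replaceOp_replaceOp_single,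
    Multiset.sum_map_sum_map_erase_comm m, Multiset.sum_map_sub]
  have swap : ∀ x y, (c y * d x) • single (g x ::ₘ f y ::ₘ (m.erase y).erase x) (1 : ℚ)
      = (d x * c y) • single (f y ::ₘ g x ::ₘ (m.erase x).erase y) 1 := by
    intro x y
    rw [mul_comm, Multiset.cons_swap, Multiset.erase_comm]
  simp only [swap]
  abel

theorem replaceOp_mem_supported {s t : Set (Multiset ℕ)}
    (h : ∀ m ∈ s, ∀ x ∈ m, c x ≠ 0 → f x ::ₘ m.erase x ∈ t) {v : Multiset ℕ →₀ ℚ}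
    (hv : v ∈ supported ℚ ℚ s) : replaceOp c f v ∈ supported ℚ ℚ t := by
  refine apply_mem_of_forall_single_mem _ (fun m hm => ?_) hv
  rw [replaceOp_single]
  refine multiset_sum_mem _ fun _ hv => ?_
  obtain ⟨x, hx, rfl⟩ := Multiset.mem_map.mp hv
  by_cases hc : c x = 0
  · rw [hc, zero_smul]
    exact zero_mem _
  · exact Submodule.smul_mem _ _ (single_mem_supported ℚ _ (h m hm x hx hc))

end ReplaceOp

noncomputable def raise (a : ℕ) : (Multiset ℕ →₀ ℚ) →ₗ[ℚ] (Multiset ℕ →₀ ℚ) :=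
  replaceOp (fun x => (a : ℚ) - x) (· + 1)

-- The truncated `0 - 1 = 0` is harmless: its weight is `0`.
noncomputable def lower : (Multiset ℕ →₀ ℚ) →ₗ[ℚ] (Multiset ℕ →₀ ℚ) :=
  replaceOp (fun x => (x : ℚ)) (· - 1)

theorem lower_raise_sub_raise_lower_single (a : ℕ) (m : Multiset ℕ) :
    lower (raise a (single m 1)) - raise a (lower (single m 1))
      = (m.map fun x : ℕ => (a : ℚ) - 2 * x).sum • single m 1 := by
  rw [raise, lower, replaceOp_commutator_single, Multiset.sum_smul, Multiset.map_map]
  refine congrArg _ (Multiset.map_congr rfl fun x hx => ?_)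
  rw [Function.comp_apply, Nat.add_sub_cancel, Multiset.cons_erase hx]
  rcases Nat.eq_zero_or_pos x with rfl | hx0
  · simp
  · rw [Nat.sub_add_cancel hx0, Multiset.cons_erase hx, ← sub_smul, Nat.cast_sub hx0]
    push_cast
    ring_nf

def boxMultisets (a b k : ℕ) : Finset (Multiset ℕ) :=
  (((Finset.range (a + 1)).sym b).image Sym.toMultiset).filter fun m => m.sum = k

theorem mem_boxMultisets {a b k : ℕ} {m : Multiset ℕ} :
    m ∈ boxMultisets a b k ↔ Multiset.card m = b ∧ (∀ x ∈ m, x ≤ a) ∧ m.sum = k := by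
  simp only [boxMultisets, Finset.mem_filter, Finset.mem_image, Finset.mem_sym_iff,
    Finset.mem_range, Nat.lt_succ_iff]
  constructor
  · rintro ⟨⟨s, hs, rfl⟩, hk⟩
    exact ⟨s.card_coe, hs, hk⟩
  · rintro ⟨hb, ha, hk⟩
    exact ⟨⟨⟨m, hb⟩, ha, rfl⟩, hk⟩

abbrev boxSpace (a b k : ℕ) : Submodule ℚ (Multiset ℕ →₀ ℚ) :=
  supported ℚ ℚ (boxMultisets a b k : Set (Multiset ℕ))

theorem replace_mem_boxMultisets {a b k k' x y : ℕ} {m : Multiset ℕ}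
    (hm : m ∈ boxMultisets a b k) (hx : x ∈ m) (hy : y ≤ a) (hk : k' + x = k + y) :
    y ::ₘ m.erase x ∈ boxMultisets a b k' := by
  obtain ⟨hb, ha, rfl⟩ := mem_boxMultisets.mp hm
  refine mem_boxMultisets.mpr ⟨?_, fun z hz => ?_, ?_⟩
  · rw [Multiset.card_cons, Multiset.card_erase_add_one hx, hb]
  · rcases Multiset.mem_cons.mp hz with rfl | hz
    · exact hy
    · exact ha z (Multiset.mem_of_mem_erase hz)
  · have := Multiset.sum_erase hx
    rw [Multiset.sum_cons]
    omega

theorem raise_mem_boxSpace {a b k : ℕ} {v : Multiset ℕ →₀ ℚ} (hv : v ∈ boxSpace a b k) :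
    raise a v ∈ boxSpace a b (k + 1) := by
  refine replaceOp_mem_supported _ _ (fun m hm x hx hc => ?_) hv
  have hxa : x ≠ a := by rintro rfl; exact hc (sub_self _)
  have := (mem_boxMultisets.mp hm).2.1 x hx
  exact replace_mem_boxMultisets hm hx (by omega) (by omega)

theorem lower_mem_boxSpace {a b k : ℕ} {v : Multiset ℕ →₀ ℚ} (hv : v ∈ boxSpace a b (k + 1)) :
    lower v ∈ boxSpace a b k := by
  refine replaceOp_mem_supported _ _ (fun m hm x hx hc => ?_) hv
  have hx0 : x ≠ 0 := by rintro rfl; exact hc Nat.cast_zero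
  have := (mem_boxMultisets.mp hm).2.1 x hx
  exact replace_mem_boxMultisets hm hx (by omega) (by omega)

theorem lower_eq_zero_of_mem_boxSpace_zero {a b : ℕ} {v : Multiset ℕ →₀ ℚ}
    (hv : v ∈ boxSpace a b 0) : lower v = 0 := by
  rw [← Submodule.mem_bot ℚ, ← supported_empty]
  refine replaceOp_mem_supported _ _ (fun m hm x hx hc => absurd ?_ hc) hv
  simp [Multiset.sum_eq_zero_iff.mp (mem_boxMultisets.mp hm).2.2 x hx]

theorem sum_weight_of_mem_boxMultisets {a b k : ℕ} {m : Multiset ℕ}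
    (hm : m ∈ boxMultisets a b k) :
    (m.map fun x : ℕ => (a : ℚ) - 2 * x).sum = (a * b : ℕ) - 2 * k := by
  obtain ⟨hb, -, rfl⟩ := mem_boxMultisets.mp hm
  rw [Multiset.sum_map_sub, Multiset.sum_map_mul_left, Multiset.map_const',
    Multiset.sum_replicate, hb]
  push_cast
  ring

theorem lower_raise_sub_raise_lower {a b k : ℕ} {v : Multiset ℕ →₀ ℚ} (hv : v ∈ boxSpace a b k) :
    lower (raise a v) - raise a (lower v) = ((a * b : ℕ) - 2 * k : ℚ) • v := by
  set c : ℚ := (a * b : ℕ) - 2 * k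
  suffices (lower ∘ₗ raise a - raise a ∘ₗ lower - c • 1 : Module.End ℚ _) v
      ∈ (⊥ : Submodule ℚ _) by
    rw [Submodule.mem_bot] at this
    simpa [sub_eq_zero] using this
  refine apply_mem_of_forall_single_mem _ (fun m hm => ?_) hv
  simp [c, lower_raise_sub_raise_lower_single, sum_weight_of_mem_boxMultisets hm]

theorem finrank_boxSpace (a b k : ℕ) :
    Module.finrank ℚ (boxSpace a b k) = (boxMultisets a b k).card := by
  rw [(supportedEquivFinsupp _).finrank_eq, Module.finrank_finsupp_self]
  simp

theorem card_boxMultisets_le_succ {a b k : ℕ} (hk : 2 * k < a * b) :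
    (boxMultisets a b k).card ≤ (boxMultisets a b (k + 1)).card := by
  have : Module.Finite ℚ (boxSpace a b (k + 1)) :=
    Module.Finite.equiv (supportedEquivFinsupp _).symm
  rw [← finrank_boxSpace, ← finrank_boxSpace]
  refine LinearMap.finrank_le_finrank_of_injective
    (f := (raise a).restrict fun _ hv => raise_mem_boxSpace hv) ?_
  rw [injective_iff_map_eq_zero]
  rintro ⟨v, hv⟩ hEv
  ext1
  exact eq_zero_of_raise_eq_zero (V := boxSpace a b) (N := ((a * b : ℕ) : ℚ))
    (fun _ _ => lower_mem_boxSpace) (fun _ => lower_eq_zero_of_mem_boxSpace_zero)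
    (fun _ _ => lower_raise_sub_raise_lower) (by exact_mod_cast hk) hv
    (congrArg Subtype.val hEv)

theorem pRect_eq_card_boxMultisets (k a b : ℕ) :
    OPAC.pRect k a b = (boxMultisets a b k).card := by
  refine Finset.card_bij' (fun l _ => l.parts + Multiset.replicate (b - Multiset.card l.parts) 0)
    (fun m hm => Nat.Partition.ofSums k m (mem_boxMultisets.mp hm).2.2) ?_ ?_ ?_ ?_
  · intro l hl
    obtain ⟨ha, hb⟩ := (Finset.mem_filter.mp hl).2
    refine mem_boxMultisets.mpr ⟨?_, fun x hx => ?_, ?_⟩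
    · rw [Multiset.card_add, Multiset.card_replicate]; omega
    · rcases Multiset.mem_add.mp hx with hx | hx
      · exact ha x hx
      · rw [Multiset.eq_of_mem_replicate hx]; exact Nat.zero_le a
    · rw [Multiset.sum_add, l.parts_sum, Multiset.sum_replicate, smul_zero, add_zero]
  · intro m hm
    obtain ⟨hb, ha, -⟩ := mem_boxMultisets.mp hm
    refine Finset.mem_filter.mpr ⟨Finset.mem_univ _, fun x hx => ?_, ?_⟩
    · exact ha x (Multiset.mem_of_mem_filter hx)
    · exact (Multiset.card_le_card (Multiset.filter_le _ _)).trans hb.le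
  · intro l _
    ext1
    simp only [Nat.Partition.ofSums, Multiset.filter_add]
    rw [Multiset.filter_eq_self.mpr fun x hx => (l.parts_pos hx).ne',
      Multiset.filter_eq_nil.mpr fun x hx => by simp [Multiset.eq_of_mem_replicate hx], add_zero]
  · intro m hm
    have hzeros : m.filter (fun x => ¬x ≠ 0) = Multiset.replicate (m.count 0) 0 := by
      simpa only [not_not] using Multiset.filter_eq' m 0
    have hcard := congrArg Multiset.card (Multiset.filter_add_not (· ≠ 0) m)
    rw [hzeros, Multiset.card_add, Multiset.card_replicate, (mem_boxMultisets.mp hm).1] at hcard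
    change m.filter (· ≠ 0) + Multiset.replicate (b - Multiset.card (m.filter (· ≠ 0))) 0 = m
    conv_rhs => rw [← Multiset.filter_add_not (· ≠ 0) m, hzeros]
    congr 2
    omega

end GaussianUnimodal

open OPAC in
/-- unimodality of Gaussian binomial coefficients -/
theorem stmt12 (a b k : ℕ) (hk : 2 * k ≤ a * b) :
    pRect (k - 1) a b ≤ pRect k a b := by
  rcases k with _ | k
  · exact le_rfl
  · rw [Nat.add_sub_cancel, GaussianUnimodal.pRect_eq_card_boxMultisets,
      GaussianUnimodal.pRect_eq_card_boxMultisets]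
    exact GaussianUnimodal.card_boxMultisets_le_succ (by omega)
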